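/- The unit group of the Hurwitz order 𝒟 = ℤ[1, I, J, (1+I+J+IJ)/2] in Hamilton's rational quaternion algebra consists of exactly the 24 elements {±1, ±I, ±J, ±IJ, (±1 ± I ± J ± IJ)/2}, i.e. the elements of 𝒟 of reduced norm 1. -/

import Mathlib

/-! The reduced norm is multiplicative and integer-valued on the Hurwitz order, so a unit has
norm 1; conversely, if `N γ = 1` then `γ⁻¹ = γ̄` lies in the order again. An integral quaternion
of norm 1 has one coordinate `±1` and the others `0`; a half-integral one has every coordinate
`±1/2`, because each of the four squares is at least `1/4`. -/

/-- Membership in the Hurwitz order: all coordinates in `ℤ` or all in `ℤ + 1/2`. -/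
def InHurwitz (q : Quaternion ℚ) : Prop :=
  (∃ a b c d : ℤ, q = (⟨(a : ℚ), (b : ℚ), (c : ℚ), (d : ℚ)⟩ : Quaternion ℚ)) ∨
  (∃ a b c d : ℤ, q = (⟨(a : ℚ) + 1/2, (b : ℚ) + 1/2, (c : ℚ) + 1/2, (d : ℚ) + 1/2⟩ :
      Quaternion ℚ))

/-- The 24 elements `±1, ±I, ±J, ±IJ, (±1 ± I ± J ± IJ)/2`. -/
def hurwitzUnits : Set (Quaternion ℚ) :=
  {q | (∃ e : ℚ, (e = 1 ∨ e = -1) ∧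
        (q = (⟨e, 0, 0, 0⟩ : Quaternion ℚ) ∨ q = (⟨0, e, 0, 0⟩ : Quaternion ℚ) ∨
         q = (⟨0, 0, e, 0⟩ : Quaternion ℚ) ∨ q = (⟨0, 0, 0, e⟩ : Quaternion ℚ))) ∨
      (∃ a b c d : ℚ, (a = 1/2 ∨ a = -1/2) ∧ (b = 1/2 ∨ b = -1/2) ∧
        (c = 1/2 ∨ c = -1/2) ∧ (d = 1/2 ∨ d = -1/2) ∧
        q = (⟨a, b, c, d⟩ : Quaternion ℚ))}

namespace Quaternion

variable {R : Type*} [CommRing R]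

@[simp]
lemma normSq_mk (a b c d : R) :
    normSq (⟨a, b, c, d⟩ : Quaternion R) = a ^ 2 + b ^ 2 + c ^ 2 + d ^ 2 :=
  normSq_def' _

@[simp]
lemma star_mk (a b c d : R) : star (⟨a, b, c, d⟩ : Quaternion R) = ⟨a, -b, -c, -d⟩ := by
  ext <;> simp

end Quaternion

open Quaternion

lemma Int.sum_four_sq_eq_one_cases {a b c d : ℤ} (h : a ^ 2 + b ^ 2 + c ^ 2 + d ^ 2 = 1) :
    (a ^ 2 = 1 ∧ b = 0 ∧ c = 0 ∧ d = 0) ∨ (a = 0 ∧ b ^ 2 = 1 ∧ c = 0 ∧ d = 0) ∨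
      (a = 0 ∧ b = 0 ∧ c ^ 2 = 1 ∧ d = 0) ∨ (a = 0 ∧ b = 0 ∧ c = 0 ∧ d ^ 2 = 1) := by
  simp only [← sq_eq_zero_iff (a := a), ← sq_eq_zero_iff (a := b), ← sq_eq_zero_iff (a := c),
    ← sq_eq_zero_iff (a := d)]
  have := sq_nonneg a; have := sq_nonneg b; have := sq_nonneg c; have := sq_nonneg d
  omega

lemma one_fourth_le_sq_intCast_add_half (a : ℤ) : 1 / 4 ≤ ((a : ℚ) + 1 / 2) ^ 2 := by
  have h : 0 ≤ a * (a + 1) := by rcases le_or_gt 0 a with ha | ha <;> nlinarith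
  have : (0 : ℚ) ≤ a * (a + 1) := by exact_mod_cast h
  nlinarith

lemma sq_intCast_add_half_eq_one_fourth {a b c d : ℤ}
    (h : ((a : ℚ) + 1 / 2) ^ 2 + ((b : ℚ) + 1 / 2) ^ 2 + ((c : ℚ) + 1 / 2) ^ 2 +
      ((d : ℚ) + 1 / 2) ^ 2 = 1) :
    ((a : ℚ) + 1 / 2) ^ 2 = 1 / 4 ∧ ((b : ℚ) + 1 / 2) ^ 2 = 1 / 4 ∧
      ((c : ℚ) + 1 / 2) ^ 2 = 1 / 4 ∧ ((d : ℚ) + 1 / 2) ^ 2 = 1 / 4 := by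
  have := one_fourth_le_sq_intCast_add_half a; have := one_fourth_le_sq_intCast_add_half b
  have := one_fourth_le_sq_intCast_add_half c; have := one_fourth_le_sq_intCast_add_half d
  refine ⟨?_, ?_, ?_, ?_⟩ <;> linarith

lemma eq_half_or_eq_neg_half_of_sq_eq_one_fourth {x : ℚ} (h : x ^ 2 = 1 / 4) :
    x = 1 / 2 ∨ x = -1 / 2 := by
  rw [neg_div, ← (Commute.all x (1 / 2)).sq_eq_sq_iff_eq_or_eq_neg]; norm_num [h]

lemma normSq_eq_one_of_mem_hurwitzUnits {γ : Quaternion ℚ} (h : γ ∈ hurwitzUnits) :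
    normSq γ = 1 := by
  rcases h with ⟨e, he, h⟩ | ⟨a, b, c, d, ha, hb, hc, hd, rfl⟩
  · rcases he with rfl | rfl <;> rcases h with rfl | rfl | rfl | rfl <;> norm_num
  · rcases ha with rfl | rfl <;> rcases hb with rfl | rfl <;> rcases hc with rfl | rfl <;>
      rcases hd with rfl | rfl <;> norm_num

namespace InHurwitz

variable {γ : Quaternion ℚ}

lemma star (h : InHurwitz γ) : InHurwitz (star γ) := by
  rcases h with ⟨a, b, c, d, rfl⟩ | ⟨a, b, c, d, rfl⟩
  · exact Or.inl ⟨a, -b, -c, -d, (star_mk _ _ _ _).trans (by push_cast; rfl)⟩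
  · refine Or.inr ⟨a, -1 - b, -1 - c, -1 - d, (star_mk _ _ _ _).trans ?_⟩
    push_cast
    congr 1 <;> ring

lemma exists_normSq_eq_intCast (h : InHurwitz γ) : ∃ n : ℤ, normSq γ = n := by
  rcases h with ⟨a, b, c, d, rfl⟩ | ⟨a, b, c, d, rfl⟩
  · exact ⟨a ^ 2 + b ^ 2 + c ^ 2 + d ^ 2, by simp⟩
  · exact ⟨a ^ 2 + a + b ^ 2 + b + c ^ 2 + c + d ^ 2 + d + 1, by rw [normSq_mk]; push_cast; ring⟩

lemma normSq_eq_one_of_mul_eq_one {δ : Quaternion ℚ} (hγ : InHurwitz γ) (hδ : InHurwitz δ)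
    (h : γ * δ = 1) : normSq γ = 1 := by
  obtain ⟨m, hm⟩ := hγ.exists_normSq_eq_intCast
  obtain ⟨n, hn⟩ := hδ.exists_normSq_eq_intCast
  have hmn : m * n = 1 := by
    have : normSq γ * normSq δ = 1 := by rw [← map_mul, h, map_one]
    exact_mod_cast hm ▸ hn ▸ this
  have hm0 : 0 ≤ m := by exact_mod_cast hm ▸ normSq_nonneg
  rw [hm, Int.eq_one_of_mul_eq_one_right hm0 hmn, Int.cast_one]

lemma mem_hurwitzUnits_of_normSq_eq_one (h : InHurwitz γ) (hn : normSq γ = 1) :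
    γ ∈ hurwitzUnits := by
  rcases h with ⟨a, b, c, d, rfl⟩ | ⟨a, b, c, d, rfl⟩
  · have hz : a ^ 2 + b ^ 2 + c ^ 2 + d ^ 2 = 1 := by rw [normSq_mk] at hn; exact_mod_cast hn
    have hsign {x : ℤ} (hx : x ^ 2 = 1) : (x : ℚ) = 1 ∨ (x : ℚ) = -1 := by
      exact_mod_cast sq_eq_one_iff.mp hx
    rcases Int.sum_four_sq_eq_one_cases hz with ⟨ha, rfl, rfl, rfl⟩ | ⟨rfl, hb, rfl, rfl⟩ |
      ⟨rfl, rfl, hc, rfl⟩ | ⟨rfl, rfl, rfl, hd⟩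
    · exact Or.inl ⟨a, hsign ha, Or.inl (by push_cast; rfl)⟩
    · exact Or.inl ⟨b, hsign hb, Or.inr <| Or.inl (by push_cast; rfl)⟩
    · exact Or.inl ⟨c, hsign hc, Or.inr <| Or.inr <| Or.inl (by push_cast; rfl)⟩
    · exact Or.inl ⟨d, hsign hd, Or.inr <| Or.inr <| Or.inr (by push_cast; rfl)⟩
  · rw [normSq_mk] at hn
    obtain ⟨ha, hb, hc, hd⟩ := sq_intCast_add_half_eq_one_fourth hn
    exact Or.inr ⟨_, _, _, _, eq_half_or_eq_neg_half_of_sq_eq_one_fourth ha,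
      eq_half_or_eq_neg_half_of_sq_eq_one_fourth hb, eq_half_or_eq_neg_half_of_sq_eq_one_fourth hc,
      eq_half_or_eq_neg_half_of_sq_eq_one_fourth hd, rfl⟩

end InHurwitz

theorem hurwitz_unit_group (γ : Quaternion ℚ) (hγ : InHurwitz γ) :
    ((∃ δ, InHurwitz δ ∧ γ * δ = 1 ∧ δ * γ = 1) ↔ γ ∈ hurwitzUnits) ∧
    (γ ∈ hurwitzUnits ↔ Quaternion.normSq γ = 1) := by
  have units_iff : γ ∈ hurwitzUnits ↔ normSq γ = 1 :=
    ⟨normSq_eq_one_of_mem_hurwitzUnits, hγ.mem_hurwitzUnits_of_normSq_eq_one⟩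
  refine ⟨⟨fun ⟨δ, hδ, h, _⟩ ↦ units_iff.2 (hγ.normSq_eq_one_of_mul_eq_one hδ h), fun h ↦ ?_⟩,
    units_iff⟩
  refine ⟨star γ, hγ.star, ?_, ?_⟩
  · rw [self_mul_star, units_iff.1 h, coe_one]
  · rw [star_mul_self, units_iff.1 h, coe_one]
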